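/- Let n be a positive integer, and let ρ, j, λ, γ ∈ ℝ with λ ≠ 0. Suppose φ : ℝ → ℝ is three times differentiable and solves the initial value problem λ φ'''(ω) + φ(ω)ⁿ φ'(ω) + ((ρ+1)(nj−1)/3) ω φ'(ω) + ((ρ−2)(1−nj)/(3n)) φ(ω) = 0 with φ(0) = γ, φ'(0) = 0, φ''(0) = 0. Define u(x,t) = t^((ρ(1−nj)−nj−2)/(3n)) φ( x t^((ρ+1)(nj−1)/3) ) for t > 0, x ≥ 0. Then: (i) u satisfies the damped generalized KdV equation u_t + uⁿ u_x + (j/t) u + λ t^(ρ(1−nj)−nj) u_{xxx} = 0 for all t > 0, x > 0; (ii) u(0,t) = γ t^((ρ(1−nj)−nj−2)/(3n)) for all t > 0; (iii) u_x(0,t) = 0 for all t > 0; and (iv) u_{xx}(0,t) = 0 for all t > 0. -/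

import Mathlib

/-!
The ansatz is a scaling reduction. For `u = t ^ a * φ (x * t ^ b)` every `x`-derivative brings
out a factor `t ^ b`, while `∂ₜ u = t ^ (a - 1) * (a φ + b ω φ')` with `ω = x * t ^ b`. The
exponents of the paper satisfy `n a + b = -1` and `(ρ (1 - n j) - n j) + 3 b = -1`, so every term
of the damped gKdV operator carries the same power `t ^ (a - 1)`, and the remaining factor is the
ODE, whose zeroth-order coefficient `(ρ - 2)(1 - n j) / (3 n)` equals `a + j`. At `x = 0` the
ansatz evaluates `φ`, `φ'`, `φ''` at `ω = 0`, giving the boundary conditions.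
-/

/-- Partial derivative in `t` of `u = u(x,t)`. -/
noncomputable def ut (u : ℝ → ℝ → ℝ) (x t : ℝ) : ℝ := deriv (fun s => u x s) t
/-- Partial derivative in `x` of `u = u(x,t)`. -/
noncomputable def ux (u : ℝ → ℝ → ℝ) (x t : ℝ) : ℝ := deriv (fun y => u y t) x
/-- Second partial derivative in `x` of `u = u(x,t)`. -/
noncomputable def uxx (u : ℝ → ℝ → ℝ) (x t : ℝ) : ℝ := iteratedDeriv 2 (fun y => u y t) x
/-- Third partial derivative in `x` of `u = u(x,t)`. -/
noncomputable def uxxx (u : ℝ → ℝ → ℝ) (x t : ℝ) : ℝ := iteratedDeriv 3 (fun y => u y t) x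

-- No differentiability of `f` is needed, since `deriv_comp_mul_left` holds unconditionally.
theorem iteratedDeriv_comp_mul_left {𝕜 F : Type*} [NontriviallyNormedField 𝕜]
    [NormedAddCommGroup F] [NormedSpace 𝕜 F] (k : ℕ) (f : 𝕜 → F) (c : 𝕜) :
    iteratedDeriv k (fun y => f (c * y)) = fun y => c ^ k • iteratedDeriv k f (c * y) := by
  induction k with
  | zero => simp
  | succ k ih =>
    funext y
    rw [iteratedDeriv_succ, ih, deriv_fun_const_smul_field,
      deriv_comp_mul_left c (iteratedDeriv k f), iteratedDeriv_succ, smul_smul, pow_succ]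

noncomputable def selfSimilar (a b : ℝ) (φ : ℝ → ℝ) (x t : ℝ) : ℝ := t ^ a * φ (x * t ^ b)

section selfSimilar

variable {a b : ℝ} {φ : ℝ → ℝ}

theorem iteratedDeriv_selfSimilar (k : ℕ) (x t : ℝ) :
    iteratedDeriv k (fun y => selfSimilar a b φ y t) x
      = t ^ a * (t ^ b) ^ k * iteratedDeriv k φ (x * t ^ b) := by
  simp only [selfSimilar, mul_comm _ (t ^ b), iteratedDeriv_const_mul_field,
    iteratedDeriv_comp_mul_left, smul_eq_mul, mul_assoc]

theorem hasDerivAt_selfSimilar_time {x t : ℝ} (ht : 0 < t)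
    (hφ : DifferentiableAt ℝ φ (x * t ^ b)) :
    HasDerivAt (fun s => selfSimilar a b φ x s)
      (t ^ (a - 1) * (a * φ (x * t ^ b) + b * (x * t ^ b) * deriv φ (x * t ^ b))) t := by
  have hpow (c : ℝ) : HasDerivAt (fun s : ℝ => s ^ c) (c * t ^ (c - 1)) t :=
    Real.hasDerivAt_rpow_const (Or.inl ht.ne')
  have hprofile := hφ.hasDerivAt.comp t ((hpow b).const_mul x)
  refine ((hpow a).mul hprofile).congr_deriv ?_
  rw [Real.rpow_sub ht, Real.rpow_sub ht, Real.rpow_one, Function.comp_apply]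
  field_simp

theorem kdvOperator_selfSimilar {n : ℕ} {j lam e x t : ℝ} (ht : 0 < t)
    (hφ : DifferentiableAt ℝ φ (x * t ^ b))
    (hnonlin : n * a + b = -1) (hdisp : e + 3 * b = -1) :
    ut (selfSimilar a b φ) x t + selfSimilar a b φ x t ^ n * ux (selfSimilar a b φ) x t
        + j / t * selfSimilar a b φ x t + lam * t ^ e * uxxx (selfSimilar a b φ) x t
      = t ^ (a - 1) * (lam * iteratedDeriv 3 φ (x * t ^ b)
          + φ (x * t ^ b) ^ n * deriv φ (x * t ^ b) + b * (x * t ^ b) * deriv φ (x * t ^ b)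
          + (a + j) * φ (x * t ^ b)) := by
  set ω := x * t ^ b
  have hux : ux (selfSimilar a b φ) x t = t ^ a * t ^ b * deriv φ ω := by
    simpa [ux, iteratedDeriv_one] using iteratedDeriv_selfSimilar (a := a) (φ := φ) 1 x t
  have huxxx : uxxx (selfSimilar a b φ) x t = t ^ a * (t ^ b) ^ 3 * iteratedDeriv 3 φ ω :=
    iteratedDeriv_selfSimilar 3 x t
  have hnonlin' : (t ^ a) ^ n * (t ^ a * t ^ b) = t ^ (a - 1) := by
    rw [← Real.rpow_natCast (t ^ a) n, ← Real.rpow_mul ht.le, ← Real.rpow_add ht,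
      ← Real.rpow_add ht]
    congr 1
    linear_combination hnonlin
  have hdisp' : t ^ e * (t ^ a * (t ^ b) ^ 3) = t ^ (a - 1) := by
    rw [← Real.rpow_natCast (t ^ b) 3, ← Real.rpow_mul ht.le, ← Real.rpow_add ht,
      ← Real.rpow_add ht]
    congr 1
    push_cast
    linear_combination hdisp
  have hdamp : j / t * t ^ a = j * t ^ (a - 1) := by
    rw [Real.rpow_sub ht, Real.rpow_one]
    ring
  rw [ut, (hasDerivAt_selfSimilar_time ht hφ).deriv, hux, huxxx]
  simp only [selfSimilar, mul_pow]
  linear_combination (φ ω ^ n * deriv φ ω) * hnonlin' + (lam * iteratedDeriv 3 φ ω) * hdisp'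
    + φ ω * hdamp

end selfSimilar

theorem stmt_17_general (n : ℕ) (hn : 0 < n) (ρ j lam γ : ℝ)
    (φ : ℝ → ℝ) (hφ1 : Differentiable ℝ φ)
    (hode : ∀ ω : ℝ, lam * deriv (deriv (deriv φ)) ω + φ ω ^ n * deriv φ ω
      + (ρ + 1) * ((n:ℝ) * j - 1) / 3 * ω * deriv φ ω
      + (ρ - 2) * (1 - (n:ℝ) * j) / (3 * (n:ℝ)) * φ ω = 0)
    (hic : φ 0 = γ) (hic' : deriv φ 0 = 0) (hic'' : deriv (deriv φ) 0 = 0)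
    (u : ℝ → ℝ → ℝ)
    (hu : ∀ x t : ℝ, u x t = t ^ ((ρ * (1 - (n:ℝ) * j) - (n:ℝ) * j - 2) / (3 * (n:ℝ)))
      * φ (x * t ^ ((ρ + 1) * ((n:ℝ) * j - 1) / 3))) :
    (∀ t, 0 < t → ∀ x, 0 < x →
      ut u x t + (u x t) ^ n * ux u x t + j / t * u x t
        + lam * t ^ (ρ * (1 - (n:ℝ) * j) - (n:ℝ) * j) * uxxx u x t = 0) ∧
    (∀ t, 0 < t → u 0 t = γ * t ^ ((ρ * (1 - (n:ℝ) * j) - (n:ℝ) * j - 2) / (3 * (n:ℝ)))) ∧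
    (∀ t, 0 < t → ux u 0 t = 0) ∧
    (∀ t, 0 < t → uxx u 0 t = 0) := by
  set a : ℝ := (ρ * (1 - (n:ℝ) * j) - (n:ℝ) * j - 2) / (3 * (n:ℝ)) with ha
  set b : ℝ := (ρ + 1) * ((n:ℝ) * j - 1) / 3 with hb
  obtain rfl : u = selfSimilar a b φ := funext₂ hu
  have hn0 : (n : ℝ) ≠ 0 := Nat.cast_ne_zero.mpr hn.ne'
  have hnonlin : n * a + b = -1 := by rw [ha, hb]; field_simp; ring
  have hdamp : (ρ - 2) * (1 - (n:ℝ) * j) / (3 * (n:ℝ)) = a + j := by rw [ha]; field_simp; ring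
  refine ⟨fun t ht x _ => ?_, fun t _ => ?_, fun t _ => ?_, fun t _ => ?_⟩
  · rw [kdvOperator_selfSimilar ht (hφ1 _) hnonlin (by ring), ← hdamp,
      iteratedDeriv_eq_iterate]
    exact mul_eq_zero_of_right _ (hode _)
  · simp [selfSimilar, hic, mul_comm]
  · simpa [ux, iteratedDeriv_one, hic'] using iteratedDeriv_selfSimilar (a := a) (φ := φ) 1 0 t
  · simpa [uxx, iteratedDeriv_eq_iterate, hic''] using
      iteratedDeriv_selfSimilar (a := a) (φ := φ) 2 0 t

/-- Reduction of the IBVP for the damped generalized KdV equation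
`u_t + uⁿ u_x + (j/t) u + λ t^{ρ(1−nj)−nj} u_{xxx} = 0` to the IVP for a third-order ODE:
a solution `φ` of the IVP yields, via the ansatz
`u = t^{(ρ(1−nj)−nj−2)/(3n)} φ(x t^{(ρ+1)(nj−1)/3})`, a solution of the PDE satisfying
the boundary conditions at `x = 0`. -/
theorem stmt_17 (n : ℕ) (hn : 0 < n) (ρ j lam γ : ℝ) (hlam : lam ≠ 0)
    (φ : ℝ → ℝ) (hφ1 : Differentiable ℝ φ) (hφ2 : Differentiable ℝ (deriv φ))
    (hφ3 : Differentiable ℝ (deriv (deriv φ)))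
    (hode : ∀ ω : ℝ, lam * deriv (deriv (deriv φ)) ω + φ ω ^ n * deriv φ ω
      + (ρ + 1) * ((n:ℝ) * j - 1) / 3 * ω * deriv φ ω
      + (ρ - 2) * (1 - (n:ℝ) * j) / (3 * (n:ℝ)) * φ ω = 0)
    (hic : φ 0 = γ) (hic' : deriv φ 0 = 0) (hic'' : deriv (deriv φ) 0 = 0)
    (u : ℝ → ℝ → ℝ)
    (hu : ∀ x t : ℝ, u x t = t ^ ((ρ * (1 - (n:ℝ) * j) - (n:ℝ) * j - 2) / (3 * (n:ℝ)))
      * φ (x * t ^ ((ρ + 1) * ((n:ℝ) * j - 1) / 3))) :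
    (∀ t, 0 < t → ∀ x, 0 < x →
      ut u x t + (u x t) ^ n * ux u x t + j / t * u x t
        + lam * t ^ (ρ * (1 - (n:ℝ) * j) - (n:ℝ) * j) * uxxx u x t = 0) ∧
    (∀ t, 0 < t → u 0 t = γ * t ^ ((ρ * (1 - (n:ℝ) * j) - (n:ℝ) * j - 2) / (3 * (n:ℝ)))) ∧
    (∀ t, 0 < t → ux u 0 t = 0) ∧
    (∀ t, 0 < t → uxx u 0 t = 0) :=
  stmt_17_general n hn ρ j lam γ φ hφ1 hode hic hic' hic'' u hu
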